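/- arXiv:2109.04228 — 4 statements merged into one kernel-verified Lean document; each statement's English description precedes it below -/
import Mathlib

section
/- For p ≥ 2 and x, y ∈ ℝⁿ with ‖x − y‖₂ ≥ ε > 0 and x ≠ 0, letting z(x) = −‖x‖_p with subgradient ∂z(x) = −‖x‖_p^{1−p}·sign(x)⊙|x|^{p−1}, it holds that z(x) − z(y) − ⟨x − y, ∂z(x)⟩ ≤ (ρ/2)‖x − y‖₂² with ρ = 4/ε. -/
/-!
Write `w = ‖x‖_p ^ (1 - p) • sign x ⊙ |x| ^ (p - 1)` for the negated subgradient, so that the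
left-hand side is `(‖y‖_p - ‖x‖_p) + ⟪x - y, w⟫`. The first term is at most `‖x - y‖_p` by
Minkowski; the second is at most `‖x - y‖_p ‖w‖_q ≤ ‖x - y‖_p` by Hölder, `q` being the conjugate
exponent, since `‖w‖_q ^ q = ‖x‖_p ^ (-p) ∑ |x i| ^ p ≤ 1`. As `p ≥ 2`, `‖x - y‖_p ≤ ‖x - y‖_2 = d`,
and `2 d ≤ (2 / ε) d²` because `d ≥ ε`.
-/

open Finset Real

lemma Real.abs_sign_le_one (r : ℝ) : |Real.sign r| ≤ 1 := by
  rcases sign_apply_eq r with h | h | h <;> simp [h]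

section

variable {ι : Type*} [Fintype ι]

noncomputable def pNorm (p : ℝ) (u : ι → ℝ) : ℝ := (∑ i, |u i| ^ p) ^ (1 / p)

noncomputable def dualVector (p : ℝ) (x : ι → ℝ) : ι → ℝ := fun i =>
  pNorm p x ^ (1 - p) * (Real.sign (x i) * |x i| ^ (p - 1))

lemma sum_abs_rpow_nonneg (p : ℝ) (u : ι → ℝ) : 0 ≤ ∑ i, |u i| ^ p :=
  sum_nonneg fun _ _ => rpow_nonneg (abs_nonneg _) _

lemma pNorm_nonneg (p : ℝ) (u : ι → ℝ) : 0 ≤ pNorm p u :=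
  rpow_nonneg (sum_abs_rpow_nonneg p u) _

lemma pNorm_rpow {p : ℝ} (hp : p ≠ 0) (u : ι → ℝ) : pNorm p u ^ p = ∑ i, |u i| ^ p := by
  rw [pNorm, ← rpow_mul (sum_abs_rpow_nonneg p u), one_div_mul_cancel hp, rpow_one]

lemma pNorm_two (u : ι → ℝ) : pNorm 2 u = √(∑ i, u i ^ 2) := by
  simp_rw [pNorm, sqrt_eq_rpow, ← sq_abs (u _)]
  norm_cast

lemma pNorm_sub_comm (p : ℝ) (u v : ι → ℝ) : pNorm p (u - v) = pNorm p (v - u) := by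
  simp only [pNorm, Pi.sub_apply, abs_sub_comm]

lemma abs_le_pNorm {p : ℝ} (hp : 0 < p) (u : ι → ℝ) (i : ι) : |u i| ≤ pNorm p u := by
  rw [← rpow_le_rpow_iff (abs_nonneg _) (pNorm_nonneg p u) hp, pNorm_rpow hp.ne']
  exact single_le_sum (fun j _ => rpow_nonneg (abs_nonneg (u j)) p) (mem_univ i)

lemma pNorm_le_pNorm {r s : ℝ} (hr : 0 < r) (hrs : r ≤ s) (u : ι → ℝ) :
    pNorm s u ≤ pNorm r u := by
  have hs : 0 < s := hr.trans_le hrs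
  set N := pNorm r u
  rw [← rpow_le_rpow_iff (pNorm_nonneg s u) (pNorm_nonneg r u) hs, pNorm_rpow hs.ne']
  calc ∑ i, |u i| ^ s = ∑ i, |u i| ^ r * |u i| ^ (s - r) := by
        refine sum_congr rfl fun i _ => ?_
        rw [← rpow_add' (abs_nonneg _) (by linarith), add_sub_cancel]
    _ ≤ ∑ i, |u i| ^ r * N ^ (s - r) := by
        gcongr with i
        exact abs_le_pNorm hr u i
    _ = N ^ s := by
        rw [← sum_mul, ← pNorm_rpow hr.ne', ← rpow_add' (pNorm_nonneg r u) (by linarith),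
          add_sub_cancel]

lemma pNorm_sub_pNorm_le {p : ℝ} (hp : 1 ≤ p) (u v : ι → ℝ) :
    pNorm p v - pNorm p u ≤ pNorm p (u - v) := by
  have h : pNorm p v ≤ pNorm p u + pNorm p (v - u) := by
    simpa [pNorm] using Lp_add_le univ u (v - u) hp
  rw [pNorm_sub_comm]
  linarith

lemma inner_le_pNorm_mul_pNorm {p q : ℝ} (hpq : p.HolderConjugate q) (u v : ι → ℝ) :
    ∑ i, u i * v i ≤ pNorm p u * pNorm q v :=
  inner_le_Lp_mul_Lq univ u v hpq

lemma pNorm_dualVector_le_one {p q : ℝ} (hpq : p.HolderConjugate q) (x : ι → ℝ) :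
    pNorm q (dualVector p x) ≤ 1 := by
  set L := pNorm p x
  have hL : 0 ≤ L := pNorm_nonneg p x
  have hterm (i : ι) : |dualVector p x i| ^ q ≤ (L ^ p)⁻¹ * |x i| ^ p := by
    have habs : |dualVector p x i| ≤ L ^ (1 - p) * |x i| ^ (p - 1) := by
      rw [dualVector, abs_mul, abs_mul, abs_of_nonneg (rpow_nonneg hL _),
        abs_of_nonneg (rpow_nonneg (abs_nonneg _) _)]
      gcongr
      exact mul_le_of_le_one_left (rpow_nonneg (abs_nonneg _) _) (abs_sign_le_one _)
    calc |dualVector p x i| ^ q ≤ (L ^ (1 - p) * |x i| ^ (p - 1)) ^ q := by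
          gcongr; exact hpq.symm.nonneg
      _ = (L ^ p)⁻¹ * |x i| ^ p := by
          rw [mul_rpow (rpow_nonneg hL _) (rpow_nonneg (abs_nonneg _) _), ← rpow_mul hL,
            ← rpow_mul (abs_nonneg _), hpq.sub_one_mul_conj, ← rpow_neg hL,
            show (1 - p) * q = -p by linear_combination -hpq.mul_eq_add]
  have hsum : ∑ i, |dualVector p x i| ^ q ≤ 1 :=
    calc ∑ i, |dualVector p x i| ^ q ≤ ∑ i, (L ^ p)⁻¹ * |x i| ^ p := sum_le_sum fun i _ => hterm i
      _ = (L ^ p)⁻¹ * L ^ p := by rw [← mul_sum, pNorm_rpow hpq.ne_zero]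
      _ ≤ 1 := inv_mul_le_one_of_le₀ le_rfl (rpow_nonneg hL _)
  exact rpow_le_one (sum_abs_rpow_nonneg q _) hsum (one_div_nonneg.2 hpq.symm.nonneg)

end

theorem stmt_4_general (n : ℕ) (p ε : ℝ) (hp : 2 ≤ p) (hε : 0 < ε)
    (x y : Fin n → ℝ)
    (hfar : ε ≤ Real.sqrt (∑ i : Fin n, (x i - y i) ^ 2)) :
    letI lpnorm : (Fin n → ℝ) → ℝ := fun u => (∑ i : Fin n, |u i| ^ p) ^ (1 / p)
    letI z : (Fin n → ℝ) → ℝ := fun u => -lpnorm u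
    letI v : Fin n → ℝ := fun i =>
      -((lpnorm x) ^ (1 - p) * (Real.sign (x i) * |x i| ^ (p - 1)))
    z x - z y - (∑ i : Fin n, (x i - y i) * v i) ≤
      (4 / ε) / 2 * ∑ i : Fin n, (x i - y i) ^ 2 := by
  show -pNorm p x - -pNorm p y - ∑ i, (x i - y i) * -dualVector p x i ≤ _
  set d := pNorm 2 (x - y)
  have hd : √(∑ i, (x i - y i) ^ 2) = d := (pNorm_two (x - y)).symm
  have hpq := HolderConjugate.conjExponent (by linarith : 1 < p)
  have hnorm : pNorm p y - pNorm p x ≤ d :=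
    (pNorm_sub_pNorm_le (by linarith) x y).trans (pNorm_le_pNorm two_pos hp _)
  have hinner : ∑ i, (x i - y i) * dualVector p x i ≤ d :=
    calc ∑ i, (x i - y i) * dualVector p x i
        ≤ pNorm p (x - y) * pNorm (conjExponent p) (dualVector p x) :=
          inner_le_pNorm_mul_pNorm hpq (x - y) _
      _ ≤ pNorm p (x - y) :=
          mul_le_of_le_one_right (pNorm_nonneg _ _) (pNorm_dualVector_le_one hpq x)
      _ ≤ d := pNorm_le_pNorm two_pos hp _
  have hεd : ε ≤ d := hd ▸ hfar
  have hsq : ∑ i, (x i - y i) ^ 2 = d ^ 2 := by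
    rw [← hd, sq_sqrt (sum_nonneg fun i _ => sq_nonneg _)]
  calc -pNorm p x - -pNorm p y - ∑ i, (x i - y i) * -dualVector p x i
      = (pNorm p y - pNorm p x) + ∑ i, (x i - y i) * dualVector p x i := by
        simp only [mul_neg, sum_neg_distrib]; ring
    _ ≤ 2 * d := by linarith
    _ ≤ 4 / ε / 2 * ∑ i, (x i - y i) ^ 2 := by
        rw [hsq, show 4 / ε / 2 * d ^ 2 = 2 * d * (d / ε) by ring]
        exact le_mul_of_one_le_right (by linarith) ((one_le_div hε).2 hεd)

/-- local bounded nonconvexity of z(x) = -‖x‖_p for p ≥ 2,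
with ρ = 4/ε whenever ‖x - y‖₂ ≥ ε. -/
theorem stmt_4 (n : ℕ) (p ε : ℝ) (hp : 2 ≤ p) (hε : 0 < ε)
    (x y : Fin n → ℝ) (hx : x ≠ 0)
    (hfar : ε ≤ Real.sqrt (∑ i : Fin n, (x i - y i) ^ 2)) :
    letI lpnorm : (Fin n → ℝ) → ℝ := fun u => (∑ i : Fin n, |u i| ^ p) ^ (1 / p)
    letI z : (Fin n → ℝ) → ℝ := fun u => -lpnorm u
    letI v : Fin n → ℝ := fun i =>
      -((lpnorm x) ^ (1 - p) * (Real.sign (x i) * |x i| ^ (p - 1)))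
    z x - z y - (∑ i : Fin n, (x i - y i) * v i) ≤
      (4 / ε) / 2 * ∑ i : Fin n, (x i - y i) ^ 2 :=
  stmt_4_general n p ε hp hε x y hfar
end

section
/- Let F = f + h − g on ℝⁿ where f is convex differentiable with coordinate-wise Lipschitz gradient constants cᵢ, h is convex separable, and g is convex. Let θ ≥ 0 and suppose ẍ is a coordinate-wise stationary point: for each i, η = 0 minimizes η ↦ f(ẍ) + ⟨∇f(ẍ), ηeᵢ⟩ + ((cᵢ+θ)/2)η² + h(ẍ + ηeᵢ) − g(ẍ + ηeᵢ). Suppose also −g is locally ρ-bounded nonconvex at ẍ: −g(ẍ) ≤ −g(y) − ⟨ẍ − y, v⟩ + (ρ/2)‖ẍ − y‖² for some v ∈ ∂g(ẍ) and all y. Then for all d ∈ ℝⁿ: F(ẍ) − F(ẍ + d) ≤ (1/2)Σᵢ (cᵢ + θ + ρ)dᵢ². -/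
/-!
Test coordinate-wise stationarity with `η = dᵢ` and bound the increment of `g` along `eᵢ` from
below by the subgradient `v`: for every `i`,
`0 ≤ ∂ᵢf(ẍ) dᵢ + (cᵢ + θ)/2 dᵢ² + hᵢ(ẍᵢ + dᵢ) - hᵢ(ẍᵢ) - vᵢ dᵢ`.
Summing over `i`, the first-order terms add up to `∇f(ẍ)·d ≤ f(ẍ + d) - f(ẍ)` (convexity of `f`),
and the ρ-bounded nonconvexity of `-g` gives `g(ẍ + d) - g(ẍ) ≤ ⟨v, d⟩ + ρ/2 ‖d‖²`.
-/

open Finset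

theorem ConvexOn.apply_le_sub_of_hasFDerivAt {E : Type*} [NormedAddCommGroup E] [NormedSpace ℝ E]
    {f : E → ℝ} {f' : E →L[ℝ] ℝ} {x : E} (hf : ConvexOn ℝ Set.univ f) (hf' : HasFDerivAt f f' x)
    (d : E) : f' d ≤ f (x + d) - f x := by
  have hline : ConvexOn ℝ Set.univ (f ∘ AffineMap.lineMap (k := ℝ) x (x + d)) := by
    simpa using hf.comp_affineMap (AffineMap.lineMap x (x + d))
  have hderiv : HasDerivAt (f ∘ AffineMap.lineMap (k := ℝ) x (x + d)) (f' d) 0 := by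
    have hx : HasFDerivAt f f' (AffineMap.lineMap (k := ℝ) x (x + d) 0) := by simpa using hf'
    simpa using hx.comp_hasDerivAt (0 : ℝ) AffineMap.hasDerivAt_lineMap
  simpa [slope] using hline.le_slope_of_hasDerivAt (Set.mem_univ 0) (Set.mem_univ 1) one_pos hderiv

theorem sum_apply_add_single {n : ℕ} (φ : Fin n → ℝ → ℝ) (x : Fin n → ℝ) (i : Fin n) (t : ℝ) :
    ∑ j, φ j ((x + Pi.single i t : Fin n → ℝ) j) =
      ∑ j, φ j (x j) + (φ i (x i + t) - φ i (x i)) := by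
  rw [← sub_eq_iff_eq_add', ← sum_sub_distrib, Fintype.sum_eq_single i]
  · simp
  · intro j hj
    simp [Pi.single_eq_of_ne hj]

theorem le_apply_add_single_of_subgradient {n : ℕ} {g : (Fin n → ℝ) → ℝ} {x v : Fin n → ℝ}
    (hv : ∀ y, g x + ∑ j, v j * (y j - x j) ≤ g y) (i : Fin n) (t : ℝ) :
    g x + v i * t ≤ g (x + Pi.single i t) := by
  have h := hv (x + Pi.single i t)
  simp only [Pi.add_apply, add_sub_cancel_left] at h
  rwa [show ∑ j, v j * (Pi.single i t : Fin n → ℝ) j = v i * t from dotProduct_single v t i] at h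

theorem stmt_5_general (n : ℕ) (f g : (Fin n → ℝ) → ℝ) (hcomp : Fin n → ℝ → ℝ)
    (c : Fin n → ℝ) (θ ρ : ℝ)
    (hf_conv : ConvexOn ℝ Set.univ f)
    (hf_diff : Differentiable ℝ f)
    (xdd : Fin n → ℝ)  -- the coordinate-wise stationary point ẍ
    (v : Fin n → ℝ)
    (hv_sub : ∀ y : Fin n → ℝ, g xdd + ∑ i : Fin n, v i * (y i - xdd i) ≤ g y)
    (hlocal : ∀ y : Fin n → ℝ,
      -g xdd ≤ -g y - (∑ i : Fin n, (xdd i - y i) * v i) +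
        ρ / 2 * ∑ i : Fin n, (xdd i - y i) ^ 2)
    -- coordinate-wise stationarity: η = 0 minimizes M_i(ẍ, ·) for every i
    (hcws : ∀ (i : Fin n) (η : ℝ),
      f xdd + (∑ j : Fin n, hcomp j (xdd j)) - g xdd ≤
        f xdd + fderiv ℝ f xdd (Pi.single i η) + (c i + θ) / 2 * η ^ 2 +
          (∑ j : Fin n, hcomp j (((xdd + Pi.single i η) : Fin n → ℝ) j)) -
          g (xdd + Pi.single i η)) :
    ∀ d : Fin n → ℝ,
      (f xdd + (∑ j : Fin n, hcomp j (xdd j)) - g xdd) -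
        (f (xdd + d) + (∑ j : Fin n, hcomp j ((xdd + d) j)) - g (xdd + d)) ≤
      1 / 2 * ∑ i : Fin n, (c i + θ + ρ) * (d i) ^ 2 := by
  intro d
  have hcoord : ∀ i, 0 ≤ fderiv ℝ f xdd (Pi.single i (d i)) + (c i + θ) / 2 * d i ^ 2 +
      (hcomp i (xdd i + d i) - hcomp i (xdd i)) - v i * d i := fun i => by
    have hstat := hcws i (d i)
    rw [sum_apply_add_single] at hstat
    linarith [le_apply_add_single_of_subgradient hv_sub i (d i)]
  have hsum := sum_nonneg fun i (_ : i ∈ univ) => hcoord i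
  simp only [sum_add_distrib, sum_sub_distrib, ← map_sum, univ_sum_single] at hsum
  have hgrad := hf_conv.apply_le_sub_of_hasFDerivAt (hf_diff xdd).hasFDerivAt d
  have hg := hlocal (xdd + d)
  simp only [Pi.add_apply, sub_add_cancel_left, neg_mul, sum_neg_distrib, neg_sq,
    mul_comm (d _)] at hg
  have hquad : 1 / 2 * ∑ i, (c i + θ + ρ) * d i ^ 2 =
      ∑ i, (c i + θ) / 2 * d i ^ 2 + ρ / 2 * ∑ i, d i ^ 2 := by
    rw [mul_sum, mul_sum, ← sum_add_distrib]
    exact sum_congr rfl fun i _ => by ring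
  simp only [Pi.add_apply]
  linarith

/-- Lemma 5.7: quadratic growth at a coordinate-wise stationary point. -/
theorem stmt_5 (n : ℕ) (f g : (Fin n → ℝ) → ℝ) (hcomp : Fin n → ℝ → ℝ)
    (c : Fin n → ℝ) (θ ρ : ℝ)
    (hf_conv : ConvexOn ℝ Set.univ f)
    (hf_diff : Differentiable ℝ f)
    (hc : ∀ i, 0 ≤ c i)
    (hlip : ∀ (x : Fin n → ℝ) (η : ℝ) (i : Fin n),
      f (x + Pi.single i η) ≤ f x + fderiv ℝ f x (Pi.single i η) + c i / 2 * η ^ 2)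
    (hh_conv : ∀ i, ConvexOn ℝ Set.univ (hcomp i))
    (hg_conv : ConvexOn ℝ Set.univ g)
    (hθ : 0 ≤ θ)
    (xdd : Fin n → ℝ)  -- the coordinate-wise stationary point ẍ
    (v : Fin n → ℝ)
    (hv_sub : ∀ y : Fin n → ℝ, g xdd + ∑ i : Fin n, v i * (y i - xdd i) ≤ g y)
    (hlocal : ∀ y : Fin n → ℝ,
      -g xdd ≤ -g y - (∑ i : Fin n, (xdd i - y i) * v i) +
        ρ / 2 * ∑ i : Fin n, (xdd i - y i) ^ 2)
    -- coordinate-wise stationarity: η = 0 minimizes M_i(ẍ, ·) for every i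
    (hcws : ∀ (i : Fin n) (η : ℝ),
      f xdd + (∑ j : Fin n, hcomp j (xdd j)) - g xdd ≤
        f xdd + fderiv ℝ f xdd (Pi.single i η) + (c i + θ) / 2 * η ^ 2 +
          (∑ j : Fin n, hcomp j (((xdd + Pi.single i η) : Fin n → ℝ) j)) -
          g (xdd + Pi.single i η)) :
    ∀ d : Fin n → ℝ,
      (f xdd + (∑ j : Fin n, hcomp j (xdd j)) - g xdd) -
        (f (xdd + d) + (∑ j : Fin n, hcomp j ((xdd + d) j)) - g (xdd + d)) ≤
      1 / 2 * ∑ i : Fin n, (c i + θ + ρ) * (d i) ^ 2 :=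
  stmt_5_general n f g hcomp c θ ρ hf_conv hf_diff xdd v hv_sub hlocal hcws
end

section
/- With C symmetric PSD having largest eigenvalue λ₁ > 0 and unit eigenvector u₁, and α > 0, the points x̄ = ±(√λ₁/α)u₁ are global minimizers of F(x) = (α/2)‖x‖² − √(xᵀCx), with optimal value F(x̄) = −λ₁/(2α). -/
/-!
Since `xᵀCx ≤ λ₁‖x‖²`, with `t = ‖x‖` we get `F x ≥ α/2 t² - √λ₁ t ≥ -λ₁/(2α)` by completing
the square, and both bounds are attained along `±u₁` at `t = √λ₁/α`.
-/

open Matrix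

noncomputable def sqrtQuadObjective {ι : Type*} [Fintype ι] (α : ℝ) (C : Matrix ι ι ℝ)
    (x : ι → ℝ) : ℝ :=
  α / 2 * ∑ i, x i ^ 2 - Real.sqrt (x ⬝ᵥ C *ᵥ x)

lemma neg_sq_div_le_quadratic {α : ℝ} (hα : 0 < α) (b t : ℝ) :
    -(b ^ 2 / (2 * α)) ≤ α / 2 * t ^ 2 - b * t := by
  have hsquare : α / 2 * t ^ 2 - b * t + b ^ 2 / (2 * α) = (α * t - b) ^ 2 / (2 * α) := by
    field_simp
    ring
  have : 0 ≤ (α * t - b) ^ 2 / (2 * α) := by positivity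
  linarith

section

variable {ι : Type*} [Fintype ι] {C : Matrix ι ι ℝ} {lam α : ℝ}

lemma neg_div_le_sqrtQuadObjective (hlam : 0 ≤ lam) (hα : 0 < α) {x : ι → ℝ}
    (htop : x ⬝ᵥ C *ᵥ x ≤ lam * ∑ i, x i ^ 2) :
    -(lam / (2 * α)) ≤ sqrtQuadObjective α C x := by
  set s := ∑ i, x i ^ 2
  have hs : Real.sqrt s ^ 2 = s := Real.sq_sqrt (Finset.sum_nonneg fun i _ => sq_nonneg _)
  have hquad : Real.sqrt (x ⬝ᵥ C *ᵥ x) ≤ Real.sqrt lam * Real.sqrt s := by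
    rw [← Real.sqrt_mul hlam]
    exact Real.sqrt_le_sqrt htop
  calc -(lam / (2 * α))
      = -(Real.sqrt lam ^ 2 / (2 * α)) := by rw [Real.sq_sqrt hlam]
    _ ≤ α / 2 * Real.sqrt s ^ 2 - Real.sqrt lam * Real.sqrt s :=
        neg_sq_div_le_quadratic hα _ _
    _ ≤ sqrtQuadObjective α C x := by
        rw [hs, sqrtQuadObjective]
        linarith

lemma sqrtQuadObjective_smul_eigenvector {u : ι → ℝ} (heig : C *ᵥ u = lam • u)
    (hunit : ∑ i, u i ^ 2 = 1) (c : ℝ) :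
    sqrtQuadObjective α C (c • u) = α / 2 * c ^ 2 - |c| * Real.sqrt lam := by
  have hnorm : ∑ i, (c • u) i ^ 2 = c ^ 2 := by
    simp only [Pi.smul_apply, smul_eq_mul, mul_pow, ← Finset.mul_sum, hunit, mul_one]
  have hquad : (c • u) ⬝ᵥ C *ᵥ (c • u) = c ^ 2 * lam := by
    have hself : u ⬝ᵥ u = 1 := by simpa [dotProduct, pow_two] using hunit
    simp only [mulVec_smul, heig, smul_dotProduct, dotProduct_smul, hself, smul_eq_mul]
    ring
  rw [sqrtQuadObjective, hnorm, hquad, Real.sqrt_mul (sq_nonneg c), Real.sqrt_sq_eq_abs]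

lemma sqrtQuadObjective_eq_of_abs_eq {u : ι → ℝ} (heig : C *ᵥ u = lam • u)
    (hunit : ∑ i, u i ^ 2 = 1) (hlam : 0 ≤ lam) (hα : 0 < α) {c : ℝ}
    (hc : |c| = Real.sqrt lam / α) :
    sqrtQuadObjective α C (c • u) = -(lam / (2 * α)) := by
  have hc2 : c ^ 2 = lam / α ^ 2 := by
    rw [← sq_abs, hc, div_pow, Real.sq_sqrt hlam]
  rw [sqrtQuadObjective_smul_eigenvector heig hunit, hc, hc2,
    div_mul_eq_mul_div (Real.sqrt lam), Real.mul_self_sqrt hlam]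
  field_simp
  ring

end

theorem stmt_12_general (n : ℕ) (C : Matrix (Fin n) (Fin n) ℝ) (lam1 α : ℝ)
    (u1 : Fin n → ℝ)
    (htop : ∀ v : Fin n → ℝ, v ⬝ᵥ C *ᵥ v ≤ lam1 * ∑ i : Fin n, (v i) ^ 2)
    (heig : C *ᵥ u1 = lam1 • u1)
    (hunit : (∑ i : Fin n, (u1 i) ^ 2) = 1)
    (hlam : 0 < lam1) (hα : 0 < α) :
    letI F : (Fin n → ℝ) → ℝ := fun x =>
      α / 2 * (∑ i : Fin n, (x i) ^ 2) - Real.sqrt (x ⬝ᵥ C *ᵥ x)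
    (∀ x : Fin n → ℝ, F ((Real.sqrt lam1 / α) • u1) ≤ F x) ∧
    (∀ x : Fin n → ℝ, F (-((Real.sqrt lam1 / α) • u1)) ≤ F x) ∧
    F ((Real.sqrt lam1 / α) • u1) = -(lam1 / (2 * α)) ∧
    F (-((Real.sqrt lam1 / α) • u1)) = -(lam1 / (2 * α)) := by
  have hc : |Real.sqrt lam1 / α| = Real.sqrt lam1 / α := abs_of_nonneg (by positivity)
  have hpos : sqrtQuadObjective α C ((Real.sqrt lam1 / α) • u1) = -(lam1 / (2 * α)) :=
    sqrtQuadObjective_eq_of_abs_eq heig hunit hlam.le hα hc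
  have hneg : sqrtQuadObjective α C (-((Real.sqrt lam1 / α) • u1)) = -(lam1 / (2 * α)) := by
    rw [← neg_smul]
    exact sqrtQuadObjective_eq_of_abs_eq heig hunit hlam.le hα (by rw [abs_neg, hc])
  have hlower (x : Fin n → ℝ) : -(lam1 / (2 * α)) ≤ sqrtQuadObjective α C x :=
    neg_div_le_sqrtQuadObjective hlam.le hα (htop x)
  exact ⟨fun x => hpos.trans_le (hlower x), fun x => hneg.trans_le (hlower x), hpos, hneg⟩

/-- Theorem D.3(b): x̄ = ±(√λ₁/α)u₁ are global minimizers of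
F(x) = (α/2)‖x‖² - √(xᵀCx) with value -λ₁/(2α). -/
theorem stmt_12 (n : ℕ) (C : Matrix (Fin n) (Fin n) ℝ) (lam1 α : ℝ)
    (u1 : Fin n → ℝ)
    (hsymm : C.IsSymm)
    (hpsd : ∀ v : Fin n → ℝ, 0 ≤ v ⬝ᵥ C *ᵥ v)
    (htop : ∀ v : Fin n → ℝ, v ⬝ᵥ C *ᵥ v ≤ lam1 * ∑ i : Fin n, (v i) ^ 2)
    (heig : C *ᵥ u1 = lam1 • u1)
    (hunit : (∑ i : Fin n, (u1 i) ^ 2) = 1)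
    (hlam : 0 < lam1) (hα : 0 < α) :
    letI F : (Fin n → ℝ) → ℝ := fun x =>
      α / 2 * (∑ i : Fin n, (x i) ^ 2) - Real.sqrt (x ⬝ᵥ C *ᵥ x)
    (∀ x : Fin n → ℝ, F ((Real.sqrt lam1 / α) • u1) ≤ F x) ∧
    (∀ x : Fin n → ℝ, F (-((Real.sqrt lam1 / α) • u1)) ≤ F x) ∧
    F ((Real.sqrt lam1 / α) • u1) = -(lam1 / (2 * α)) ∧
    F (-((Real.sqrt lam1 / α) • u1)) = -(lam1 / (2 * α)) :=
  stmt_12_general n C lam1 α u1 htop heig hunit hlam hα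
end

section
/- Let G ∈ ℝ^{m×n}, Q ∈ ℝⁿˣⁿ symmetric positive definite, p ≥ 1, and α > 0. If x̄ is a global minimizer of F₁(x) = (α/2)xᵀQx − ‖Gx‖_p with Gx̄ ≠ 0, then v̄ = x̄·(x̄ᵀQx̄)^{−1/2} maximizes ‖Gv‖_p subject to vᵀQv ≤ 1. -/
open Matrix

lemma lp_smul_aux (m : ℕ) (p : ℝ) (hp : 1 ≤ p) (c : ℝ) (w : Fin m → ℝ) :
    (∑ i : Fin m, |(c • w) i| ^ p) ^ (1 / p) =
      |c| * (∑ i : Fin m, |w i| ^ p) ^ (1 / p) := by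
  have hp0 : p ≠ 0 := by linarith
  have h1 : ∀ i : Fin m, |(c • w) i| ^ p = |c| ^ p * |w i| ^ p := by
    intro i
    simp only [Pi.smul_apply, smul_eq_mul, abs_mul]
    exact Real.mul_rpow (abs_nonneg _) (abs_nonneg _)
  simp only [h1, ← Finset.mul_sum]
  rw [Real.mul_rpow (Real.rpow_nonneg (abs_nonneg c) p)
    (Finset.sum_nonneg fun i _ => Real.rpow_nonneg (abs_nonneg _) p),
    ← Real.rpow_mul (abs_nonneg c), mul_one_div, div_self hp0, Real.rpow_one]

lemma lp_nonneg_aux (m : ℕ) (p : ℝ) (w : Fin m → ℝ) :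
    0 ≤ (∑ i : Fin m, |w i| ^ p) ^ (1 / p) :=
  Real.rpow_nonneg (Finset.sum_nonneg fun i _ => Real.rpow_nonneg (abs_nonneg _) p) _

/-- Proposition D.1(a), part: if x̄ minimizes
F₁(x) = (α/2)xᵀQx - ‖Gx‖_p with Gx̄ ≠ 0, then v̄ = x̄(x̄ᵀQx̄)^{-1/2} maximizes
‖Gv‖_p over {v : vᵀQv ≤ 1}. -/
theorem stmt_16 (m n : ℕ) (G : Matrix (Fin m) (Fin n) ℝ)
    (Q : Matrix (Fin n) (Fin n) ℝ) (hQ : Q.PosDef)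
    (p α : ℝ) (hp : 1 ≤ p) (hα : 0 < α)
    (xbar : Fin n → ℝ)
    (lp : (Fin m → ℝ) → ℝ)
    (hlp : lp = fun w => (∑ i : Fin m, |w i| ^ p) ^ (1 / p))
    (hmin : ∀ x : Fin n → ℝ,
      α / 2 * (xbar ⬝ᵥ Q *ᵥ xbar) - lp (G *ᵥ xbar) ≤
        α / 2 * (x ⬝ᵥ Q *ᵥ x) - lp (G *ᵥ x))
    (hGx : G *ᵥ xbar ≠ 0) :
    letI vbar : Fin n → ℝ := (Real.sqrt (xbar ⬝ᵥ Q *ᵥ xbar))⁻¹ • xbar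
    vbar ⬝ᵥ Q *ᵥ vbar = 1 ∧
    ∀ v : Fin n → ℝ, v ⬝ᵥ Q *ᵥ v ≤ 1 → lp (G *ᵥ v) ≤ lp (G *ᵥ vbar) := by
  have hlpsmul : ∀ (c : ℝ) (w : Fin m → ℝ), lp (c • w) = |c| * lp w := by
    intro c w; rw [hlp]; exact lp_smul_aux m p hp c w
  have hlpnn : ∀ w : Fin m → ℝ, 0 ≤ lp w := by
    intro w; rw [hlp]; exact lp_nonneg_aux m p w
  set s : ℝ := xbar ⬝ᵥ Q *ᵥ xbar with hsdef
  have hxne : xbar ≠ 0 := by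
    intro h; apply hGx; rw [h, Matrix.mulVec_zero]
  have hs : 0 < s := hQ.dotProduct_mulVec_pos hxne
  have hsqrt : 0 < Real.sqrt s := Real.sqrt_pos.mpr hs
  have hsq : Real.sqrt s * Real.sqrt s = s := Real.mul_self_sqrt hs.le
  set L : ℝ := lp (G *ᵥ xbar) with hLdef
  -- quadratic form scaling
  have hquad : ∀ (t : ℝ) (x : Fin n → ℝ),
      (t • x) ⬝ᵥ Q *ᵥ (t • x) = t ^ 2 * (x ⬝ᵥ Q *ᵥ x) := by
    intro t x
    rw [Matrix.mulVec_smul, smul_dotProduct, dotProduct_smul, smul_eq_mul, smul_eq_mul]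
    ring
  -- key inequality: for t ≥ 0 and any x, F(x̄) ≤ α/2 t² q(x) - t lp(Gx)
  have hkey : ∀ (t : ℝ), 0 ≤ t → ∀ x : Fin n → ℝ,
      α / 2 * s - L ≤ α / 2 * (t ^ 2 * (x ⬝ᵥ Q *ᵥ x)) - t * lp (G *ᵥ x) := by
    intro t ht x
    have := hmin (t • x)
    rwa [hquad, Matrix.mulVec_smul, hlpsmul, abs_of_nonneg ht] at this
  -- L = α s
  have hLs : L = α * s := by
    have h1 := hkey (L / (α * s)) (div_nonneg (hlpnn _) (by positivity)) xbar
    rw [← hsdef, ← hLdef] at h1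
    have has : (0:ℝ) < α * s := by positivity
    have hr : α / 2 * ((L / (α * s)) ^ 2 * s) - L / (α * s) * L = -(L ^ 2 / (2 * (α * s))) := by
      field_simp
      ring
    rw [hr] at h1
    have h5 := mul_le_mul_of_nonneg_right h1 (by positivity : (0:ℝ) ≤ 2 * (α * s))
    have h6 : -(L ^ 2 / (2 * (α * s))) * (2 * (α * s)) = -L ^ 2 := by
      field_simp
    rw [h6] at h5
    nlinarith [sq_nonneg (α * s - L)]
  -- value at vbar
  have hvbar : lp (G *ᵥ ((Real.sqrt s)⁻¹ • xbar)) = α * Real.sqrt s := by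
    rw [Matrix.mulVec_smul, hlpsmul, ← hLdef, hLs,
      abs_of_pos (inv_pos.mpr hsqrt)]
    rw [← hsq]
    field_simp
    rw [Real.sqrt_sq hsqrt.le]
  constructor
  · rw [hquad, ← hsdef, ← hsq]
    field_simp
    rw [Real.sqrt_sq hsqrt.le]
  · intro v hv
    rw [hvbar]
    set ℓ : ℝ := lp (G *ᵥ v) with hldef
    have hl0 : 0 ≤ ℓ := hlpnn _
    have h1 := hkey (ℓ / α) (div_nonneg hl0 hα.le) v
    rw [← hldef] at h1
    have h2 : α / 2 * ((ℓ / α) ^ 2 * (v ⬝ᵥ Q *ᵥ v)) ≤ α / 2 * ((ℓ / α) ^ 2 * 1) := by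
      apply mul_le_mul_of_nonneg_left _ (by positivity)
      exact mul_le_mul_of_nonneg_left hv (by positivity)
    have h3 : α / 2 * s - L ≤ α / 2 * ((ℓ / α) ^ 2) - (ℓ / α) * ℓ := by
      calc α / 2 * s - L ≤ α / 2 * ((ℓ / α) ^ 2 * (v ⬝ᵥ Q *ᵥ v)) - (ℓ / α) * ℓ := h1
      _ ≤ _ := by nlinarith
    -- so ℓ² ≤ α² s, hence ℓ ≤ α √s
    have h4 : ℓ ^ 2 ≤ α ^ 2 * s := by
      rw [hLs] at h3
      have hr : α / 2 * (ℓ / α) ^ 2 - ℓ / α * ℓ = -(ℓ ^ 2 / (2 * α)) := by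
        field_simp
        ring
      rw [hr] at h3
      have h5 := mul_le_mul_of_nonneg_right h3 (by positivity : (0:ℝ) ≤ 2 * α)
      have h6 : -(ℓ ^ 2 / (2 * α)) * (2 * α) = -ℓ ^ 2 := by field_simp
      rw [h6] at h5
      nlinarith
    nlinarith [hsq, hl0, mul_pos hα hsqrt, sq_nonneg (ℓ - α * Real.sqrt s),
      sq_nonneg (ℓ + α * Real.sqrt s)]
end
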